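/- Let N be a positive integer, let K be an integer with 1 ≤ K ≤ N^{1/3}, and let 2/3 < β < 1 and C > 0. Let μ : ℤ/Nℤ → ℂ satisfy |μ̂(k)| ≤ C·(min(k, N−k)·N)^{−β/2} for all 1 ≤ k ≤ N−1. Define μ₁ by μ̂₁(n) = (1 − n/(K+1))·μ̂(n) for 0 ≤ n ≤ K and μ̂₁(n) = 0 for K < n ≤ N−1, and let μ₃ = μ₁ − E(μ₁), where E(μ₁) = (1/N) ∑_{x=0}^{N−1} μ₁(x). Then there is a constant C′ depending only on C and β such that ∑_{n=0}^{N−1} |μ̂₃(n)|² ≤ C′·N^{(1−4β)/3}; consequently ‖μ₃‖_{L²(ℤ/Nℤ)} ≤ √(C′)·N^{(1−4β)/6}. -/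

import Mathlib

/-!
Subtracting the mean kills the zeroth Fourier coefficient of `μ₁` and leaves the others unchanged,
so `μ̂₃` is supported on `1 ≤ n ≤ K`, where the Fejér weight `1 - n/(K+1)` lies in `[0, 1]`.
Since `K³ ≤ N`, these `n` satisfy `2n ≤ N`, so `min(n, N - n) = n` and
`|μ̂₃(n)|² ≤ C² N^{-β} n^{-β}`.
Comparing `n^{-β}` with the increments of the concave function `x^{1-β}` gives
`∑_{n ≤ K} n^{-β} ≤ K^{1-β}/(1-β) ≤ N^{(1-β)/3}/(1-β)`, hence the bound `C²/(1-β) · N^{(1-4β)/3}`.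
The `L²` bound follows by Parseval, which reduces to the orthogonality of the powers of a
primitive `N`-th root of unity.
-/

open Complex Real Finset

/-- Discrete Fourier coefficient of `f : ℤ/Nℤ → ℂ`, extended `N`-periodically in `k`. -/
noncomputable def zmodFourier (N : ℕ) (f : ZMod N → ℂ) (k : ℤ) : ℂ :=
  (N : ℂ)⁻¹ * ∑ n ∈ Finset.range N,
    f n * Complex.exp (-(2 * Real.pi * Complex.I * k * n) / N)

open ComplexConjugate

theorem IsPrimitiveRoot.sum_range_pow_mul_inv_pow {F : Type*} [Field F] {ω : F} {N : ℕ}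
    (hω : IsPrimitiveRoot ω N) {n m : ℕ} (hn : n < N) (hm : m < N) :
    ∑ k ∈ range N, (ω ^ n * ω⁻¹ ^ m) ^ k = if n = m then (N : F) else 0 := by
  have hω0 : ω ≠ 0 := hω.ne_zero (by omega)
  split_ifs with h
  · simp [h, hω0]
  · have hz : ω ^ n * ω⁻¹ ^ m ≠ 1 := by
      rw [inv_pow, ← div_eq_mul_inv, Ne, div_eq_one_iff_eq (pow_ne_zero _ hω0)]
      exact fun h' => h (hω.pow_inj hn hm h')
    rw [geom_sum_eq hz, mul_pow, ← pow_mul, ← pow_mul, mul_comm n, mul_comm m, pow_mul, pow_mul,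
      inv_pow, hω.pow_eq_one]
    simp

theorem IsPrimitiveRoot.sum_sq_norm_sum_mul_pow {ω : ℂ} {N : ℕ} (hω : IsPrimitiveRoot ω N)
    (a : ℕ → ℂ) :
    ∑ k ∈ range N, ‖∑ n ∈ range N, a n * ω ^ (k * n)‖ ^ 2 = N * ∑ n ∈ range N, ‖a n‖ ^ 2 := by
  obtain rfl | hN := eq_or_ne N 0
  · simp
  have hconj : conj ω = ω⁻¹ := (RCLike.inv_eq_conj (hω.norm'_eq_one hN)).symm
  apply Complex.ofReal_injective
  push_cast
  simp only [← Complex.mul_conj', map_sum, map_mul, map_pow, hconj]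
  calc ∑ k ∈ range N, (∑ n ∈ range N, a n * ω ^ (k * n)) * ∑ m ∈ range N, conj (a m) * ω⁻¹ ^ (k * m)
      = ∑ n ∈ range N, ∑ m ∈ range N, a n * conj (a m) * ∑ k ∈ range N, (ω ^ n * ω⁻¹ ^ m) ^ k := by
        simp_rw [sum_mul_sum, mul_sum]
        rw [sum_comm]
        refine sum_congr rfl fun n _ => ?_
        rw [sum_comm]
        refine sum_congr rfl fun m _ => sum_congr rfl fun k _ => ?_
        ring
    _ = N * ∑ n ∈ range N, a n * conj (a n) := by
        rw [mul_sum]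
        refine sum_congr rfl fun n hn => ?_
        rw [sum_congr rfl fun m hm => by
          rw [hω.sum_range_pow_mul_inv_pow (mem_range.1 hn) (mem_range.1 hm), mul_ite, mul_zero]]
        simp [hn, mul_comm]

lemma isPrimitiveRoot_exp_neg_two_pi_I_div {N : ℕ} (hN : N ≠ 0) :
    IsPrimitiveRoot (exp (-(2 * π * I / N))) N := by
  rw [Complex.exp_neg]
  exact (Complex.isPrimitiveRoot_exp N hN).inv

lemma zmodFourier_natCast (N : ℕ) (f : ZMod N → ℂ) (k : ℕ) :
    zmodFourier N f k = (N : ℂ)⁻¹ * ∑ n ∈ range N, f n * exp (-(2 * π * I / N)) ^ (k * n) := by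
  simp only [zmodFourier, ← Complex.exp_nat_mul]
  congr 1
  refine sum_congr rfl fun n _ => ?_
  push_cast
  ring_nf

theorem sum_sq_norm_zmodFourier (N : ℕ) (f : ZMod N → ℂ) :
    ∑ k ∈ range N, ‖zmodFourier N f k‖ ^ 2 = (N : ℝ)⁻¹ * ∑ n ∈ range N, ‖f n‖ ^ 2 := by
  obtain rfl | hN := eq_or_ne N 0
  · simp
  simp_rw [zmodFourier_natCast, norm_mul, mul_pow, ← mul_sum,
    (isPrimitiveRoot_exp_neg_two_pi_I_div hN).sum_sq_norm_sum_mul_pow]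
  simp only [norm_inv, Complex.norm_natCast, inv_pow]
  field_simp

lemma zmodFourier_sub_mean {N : ℕ} (f : ZMod N → ℂ) {k : ℕ} (hk : k < N) :
    zmodFourier N (fun x => f x - (N : ℂ)⁻¹ * ∑ y ∈ range N, f y) k =
      if k = 0 then 0 else zmodFourier N f k := by
  have hN : N ≠ 0 := by omega
  have horth := (isPrimitiveRoot_exp_neg_two_pi_I_div hN).sum_range_pow_mul_inv_pow hk
    (Nat.pos_of_ne_zero hN)
  simp only [pow_zero, mul_one, ← pow_mul] at horth
  rw [zmodFourier_natCast, zmodFourier_natCast]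
  simp only [sub_mul, sum_sub_distrib, ← mul_sum, horth]
  split_ifs with hk0
  · subst hk0
    field_simp
    simp
  · simp

lemma one_sub_mul_rpow_neg_le_rpow_sub_rpow {x β : ℝ} (hx : 0 ≤ x) (hβ₀ : 0 ≤ β) (hβ₁ : β ≤ 1) :
    (1 - β) * (x + 1) ^ (-β) ≤ (x + 1) ^ (1 - β) - x ^ (1 - β) := by
  have hx1 : 0 < x + 1 := by linarith
  have hbern := rpow_one_add_le_one_add_mul_self (s := -(x + 1)⁻¹) (p := 1 - β)
    (by simpa using inv_le_one_of_one_le₀ (by linarith : (1 : ℝ) ≤ x + 1)) (by linarith)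
    (by linarith)
  have hbase : 1 + -(x + 1)⁻¹ = x / (x + 1) := by field_simp; ring
  rw [hbase] at hbern
  have hpow : (x + 1) ^ (-β) = (x + 1) ^ (1 - β) * (x + 1)⁻¹ := by
    rw [show -β = (1 - β) + -1 by ring, rpow_add hx1, rpow_neg_one]
  calc (1 - β) * (x + 1) ^ (-β)
      = (x + 1) ^ (1 - β) - (1 + (1 - β) * -(x + 1)⁻¹) * (x + 1) ^ (1 - β) := by rw [hpow]; ring
    _ ≤ (x + 1) ^ (1 - β) - (x / (x + 1)) ^ (1 - β) * (x + 1) ^ (1 - β) := by gcongr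
    _ = (x + 1) ^ (1 - β) - x ^ (1 - β) := by
        rw [div_rpow hx hx1.le, div_mul_cancel₀ _ (rpow_pos_of_pos hx1 _).ne']

theorem sum_Icc_rpow_neg_le {β : ℝ} (hβ₀ : 0 ≤ β) (hβ₁ : β < 1) (K : ℕ) :
    ∑ n ∈ Icc 1 K, (n : ℝ) ^ (-β) ≤ (K : ℝ) ^ (1 - β) / (1 - β) := by
  have hβ : 0 < 1 - β := by linarith
  induction K with
  | zero => simp [zero_rpow hβ.ne']
  | succ K ih =>
    rw [sum_Icc_succ_top (by omega), le_div_iff₀ hβ, add_mul]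
    have := one_sub_mul_rpow_neg_le_rpow_sub_rpow (K.cast_nonneg : (0 : ℝ) ≤ K) hβ₀ hβ₁.le
    rw [le_div_iff₀ hβ] at ih
    push_cast
    linarith

lemma norm_one_sub_natCast_div_le_one {n K : ℕ} (h : n ≤ K + 1) :
    ‖1 - (n : ℂ) / (K + 1)‖ ≤ 1 := by
  have hK : (0 : ℝ) < K + 1 := by positivity
  have hn : (n : ℝ) / (K + 1) ≤ 1 := div_le_one_of_le₀ (by exact_mod_cast h) hK.le
  rw [show (1 : ℂ) - n / (K + 1) = ((1 - n / (K + 1) : ℝ) : ℂ) by push_cast; ring,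
    Complex.norm_real, Real.norm_eq_abs, abs_le]
  constructor <;> linarith [div_nonneg n.cast_nonneg hK.le]

lemma sq_le_mul_rpow_of_le_mul_rpow_neg_half {a C x β : ℝ} (ha : 0 ≤ a) (hx : 0 ≤ x)
    (h : a ≤ C * x ^ (-β / 2)) : a ^ 2 ≤ C ^ 2 * x ^ (-β) := by
  calc a ^ 2 ≤ (C * x ^ (-β / 2)) ^ 2 := pow_le_pow_left₀ ha h 2
    _ = C ^ 2 * x ^ (-β) := by rw [mul_pow, ← rpow_mul_natCast hx]; norm_num

lemma pow_three_le_of_le_rpow_one_div_three {K N : ℕ} (h : (K : ℝ) ≤ (N : ℝ) ^ ((1 : ℝ) / 3)) :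
    K ^ 3 ≤ N := by
  have := pow_le_pow_left₀ K.cast_nonneg h 3
  rw [one_div, ← Nat.cast_ofNat (n := 3) (R := ℝ),
    rpow_inv_natCast_pow N.cast_nonneg three_ne_zero] at this
  exact_mod_cast this

lemma sqrt_le_sqrt_mul_rpow_of_le {S c x a : ℝ} (hx : 0 ≤ x) (h : S ≤ c * x ^ (2 * a)) :
    √S ≤ √c * x ^ a := by
  calc √S ≤ √(c * (x ^ a) ^ 2) := by
        rw [← rpow_natCast, ← rpow_mul hx, mul_comm a]; exact Real.sqrt_le_sqrt (by simpa using h)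
    _ = √c * x ^ a := by rw [Real.sqrt_mul' _ (by positivity), Real.sqrt_sq (rpow_nonneg hx _)]

lemma two_mul_le_of_pow_three_le {n N : ℕ} (hn : 1 ≤ n) (hnN : n < N) (h : n ^ 3 ≤ N) :
    2 * n ≤ N := by
  rcases Nat.lt_or_ge n 2 with hn2 | hn2
  · omega
  · have := Nat.mul_le_mul (Nat.mul_le_mul hn2 hn2) (le_refl n)
    nlinarith

lemma sq_norm_zmodFourier_fejer_le {N K : ℕ} {C β : ℝ} {μ μ₁ : ZMod N → ℂ} (hK : K ^ 3 ≤ N)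
    (hμ : ∀ k : ℕ, 1 ≤ k → k ≤ N - 1 →
      ‖zmodFourier N μ k‖ ≤ C * ((min k (N - k) * N : ℕ) : ℝ) ^ (-β / 2))
    (hμ₁ : ∀ n : ℕ, n ≤ K →
      zmodFourier N μ₁ n = (1 - (n : ℂ) / (K + 1)) * zmodFourier N μ n)
    {n : ℕ} (hn : 1 ≤ n) (hnK : n ≤ K) (hnN : n < N) :
    ‖zmodFourier N μ₁ n‖ ^ 2 ≤ C ^ 2 * (N : ℝ) ^ (-β) * (n : ℝ) ^ (-β) := by
  have h2n : 2 * n ≤ N := two_mul_le_of_pow_three_le hn hnN ((Nat.pow_le_pow_left hnK 3).trans hK)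
  have hμn := hμ n hn (by omega)
  rw [min_eq_left (by omega : n ≤ N - n)] at hμn
  have hμ₁n : ‖zmodFourier N μ₁ n‖ ≤ C * ((n * N : ℕ) : ℝ) ^ (-β / 2) := by
    rw [hμ₁ n hnK, norm_mul]
    exact (mul_le_of_le_one_left (norm_nonneg _) (norm_one_sub_natCast_div_le_one (by omega))).trans
      hμn
  have := sq_le_mul_rpow_of_le_mul_rpow_neg_half (norm_nonneg _) (Nat.cast_nonneg _) hμ₁n
  rwa [Nat.cast_mul, mul_rpow n.cast_nonneg N.cast_nonneg, mul_comm ((n : ℝ) ^ _), ← mul_assoc]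
    at this

lemma sum_le_sum_of_eq_zero_of_le {ι M : Type*} [AddCommMonoid M] [PartialOrder M]
    [IsOrderedAddMonoid M] {s t : Finset ι} {f g : ι → M} (hf : ∀ i ∈ s, i ∉ t → f i = 0)
    (hfg : ∀ i ∈ s, i ∈ t → f i ≤ g i) (hg : ∀ i ∈ t, 0 ≤ g i) :
    ∑ i ∈ s, f i ≤ ∑ i ∈ t, g i := by
  classical
  calc ∑ i ∈ s, f i = ∑ i ∈ s ∩ t, f i :=
        (sum_subset inter_subset_left fun i hs hst =>
          hf i hs fun ht => hst (mem_inter.2 ⟨hs, ht⟩)).symm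
    _ ≤ ∑ i ∈ s ∩ t, g i := sum_le_sum fun i hi => hfg i (mem_inter.1 hi).1 (mem_inter.1 hi).2
    _ ≤ ∑ i ∈ t, g i := sum_le_sum_of_subset_of_nonneg inter_subset_right fun i hi _ => hg i hi

lemma sum_sq_norm_zmodFourier_sub_mean_le {N K : ℕ} {C β : ℝ} {μ μ₁ : ZMod N → ℂ}
    (hK : K ^ 3 ≤ N)
    (hμ : ∀ k : ℕ, 1 ≤ k → k ≤ N - 1 →
      ‖zmodFourier N μ k‖ ≤ C * ((min k (N - k) * N : ℕ) : ℝ) ^ (-β / 2))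
    (hμ₁ : ∀ n : ℕ, n ≤ K →
      zmodFourier N μ₁ n = (1 - (n : ℂ) / (K + 1)) * zmodFourier N μ n)
    (hμ₁' : ∀ n : ℕ, K < n → n ≤ N - 1 → zmodFourier N μ₁ n = 0) :
    ∑ n ∈ range N, ‖zmodFourier N (fun x => μ₁ x - (N : ℂ)⁻¹ * ∑ y ∈ range N, μ₁ y) n‖ ^ 2 ≤
      C ^ 2 * (N : ℝ) ^ (-β) * ∑ n ∈ Icc 1 K, (n : ℝ) ^ (-β) := by
  rw [mul_sum (Icc 1 K)]
  refine sum_le_sum_of_eq_zero_of_le (fun n hnN hnK => ?_) (fun n hnN hnK => ?_)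
    (fun _ _ => by positivity)
  · rw [mem_range] at hnN
    simp only [mem_Icc, not_and_or, not_le] at hnK
    rw [zmodFourier_sub_mean μ₁ hnN]
    split_ifs
    · simp
    · simp [hμ₁' n (by omega) (by omega)]
  · obtain ⟨hn, hnK⟩ := mem_Icc.1 hnK
    rw [zmodFourier_sub_mean μ₁ (mem_range.1 hnN), if_neg (by omega)]
    exact sq_norm_zmodFourier_fejer_le hK hμ hμ₁ hn hnK (mem_range.1 hnN)

lemma rpow_neg_mul_rpow_one_sub_le {N K β : ℝ} (hN : 0 < N) (hK₀ : 0 ≤ K)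
    (hK : K ≤ N ^ ((1 : ℝ) / 3)) (hβ : β ≤ 1) :
    N ^ (-β) * K ^ (1 - β) ≤ N ^ ((1 - 4 * β) / 3) := by
  calc N ^ (-β) * K ^ (1 - β) ≤ N ^ (-β) * (N ^ ((1 : ℝ) / 3)) ^ (1 - β) := by gcongr
    _ = N ^ ((1 - 4 * β) / 3) := by
        rw [← rpow_mul hN.le, ← rpow_add hN]
        ring_nf

/-- `L²` bound on `μ₃ = μ₁ − E(μ₁)`: with `K ≤ N^{1/3}`, one has
`∑ |μ̂₃(n)|² ≤ C′ N^{(1−4β)/3}` and hence `‖μ₃‖_{L²} ≤ √C′ N^{(1−4β)/6}`,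
with `C′` depending only on `C` and `β`. -/
theorem mu3_l2_bound (C β : ℝ) (hC : 0 < C) (hβ₁ : 2/3 < β) (hβ₂ : β < 1) :
    ∃ C' : ℝ, 0 < C' ∧
      ∀ (N K : ℕ), 0 < N → 1 ≤ K → (K : ℝ) ≤ (N : ℝ) ^ ((1 : ℝ) / 3) →
      ∀ μ μ₁ : ZMod N → ℂ,
        (∀ k : ℕ, 1 ≤ k → k ≤ N - 1 →
          ‖zmodFourier N μ k‖ ≤
            C * ((min k (N - k) * N : ℕ) : ℝ) ^ (-β / 2)) →
        (∀ n : ℕ, n ≤ K →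
          zmodFourier N μ₁ n = (1 - (n : ℂ) / (K + 1)) * zmodFourier N μ n) →
        (∀ n : ℕ, K < n → n ≤ N - 1 → zmodFourier N μ₁ n = 0) →
        ∀ μ₃ : ZMod N → ℂ,
          (∀ x : ZMod N, μ₃ x = μ₁ x - (N : ℂ)⁻¹ * ∑ y ∈ Finset.range N, μ₁ y) →
          (∑ n ∈ Finset.range N, ‖zmodFourier N μ₃ n‖ ^ 2 ≤
              C' * (N : ℝ) ^ ((1 - 4 * β) / 3)) ∧
          Real.sqrt ((N : ℝ)⁻¹ * ∑ n ∈ Finset.range N, ‖μ₃ n‖ ^ 2) ≤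
            Real.sqrt C' * (N : ℝ) ^ ((1 - 4 * β) / 6) := by
  have hβ : 0 < 1 - β := by linarith
  refine ⟨C ^ 2 / (1 - β), by positivity, fun N K hN _ hKN μ μ₁ hμ hμ₁ hμ₁' μ₃ hμ₃ => ?_⟩
  have hS : ∑ n ∈ range N, ‖zmodFourier N μ₃ n‖ ^ 2 ≤ C ^ 2 / (1 - β) * N ^ ((1 - 4 * β) / 3) :=
    calc _ ≤ C ^ 2 * (N : ℝ) ^ (-β) * ∑ n ∈ Icc 1 K, (n : ℝ) ^ (-β) := by
          rw [funext hμ₃]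
          exact sum_sq_norm_zmodFourier_sub_mean_le (pow_three_le_of_le_rpow_one_div_three hKN)
            hμ hμ₁ hμ₁'
      _ ≤ C ^ 2 * (N : ℝ) ^ (-β) * ((K : ℝ) ^ (1 - β) / (1 - β)) := by
          gcongr
          exact sum_Icc_rpow_neg_le (by linarith) hβ₂ K
      _ = C ^ 2 / (1 - β) * ((N : ℝ) ^ (-β) * (K : ℝ) ^ (1 - β)) := by ring
      _ ≤ C ^ 2 / (1 - β) * N ^ ((1 - 4 * β) / 3) := by
          gcongr
          exact rpow_neg_mul_rpow_one_sub_le (by exact_mod_cast hN) K.cast_nonneg hKN hβ₂.le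
  refine ⟨hS, ?_⟩
  rw [← sum_sq_norm_zmodFourier]
  exact sqrt_le_sqrt_mul_rpow_of_le N.cast_nonneg (by convert hS using 3; ring)
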